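/- arXiv:2311.02721 — 3 statements merged into one kernel-verified Lean document; each statement's English description precedes it below -/
import Mathlib

section
/- Let b, m, n, r ∈ ℕ with m ≥ 1, r ≥ 1, n ≥ r + b and n ≥ 2b. Then |T(m,n,b)_r| = |T(m,n,b)_{r−1}| + |MP^m_b(r)|. -/
open scoped BigOperators

/-- The set of semistandard Young tableaux of the two-row shape `(n-k, k)` with entries in
`{0, 1, …, m}` whose entries sum to `r`: a tableau is recorded as the pair of its two rows,
weakly increasing along rows and strictly increasing down the (first `k`) columns. -/
def TwoRowSSYT (m n k r : ℕ) : Set ((Fin (n - k) → ℕ) × (Fin k → ℕ)) :=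
  {t | Monotone t.1 ∧ Monotone t.2 ∧
    (∀ (j : ℕ) (hk : j < k) (hnk : j < n - k), t.1 ⟨j, hnk⟩ < t.2 ⟨j, hk⟩) ∧
    (∀ i, t.1 i ≤ m) ∧ (∀ j, t.2 j ≤ m) ∧
    ((∑ i, t.1 i) + (∑ j, t.2 j) = r)}

/-- `PPset b m r` is the set of pairs `(γ, π)` of partitions (recorded as multisets of positive
natural numbers) such that `γ` has exactly `b` parts, all parts of `γ` and `π` are at most `m`,
and `|γ| + |π| = r`. -/
def PPset (b m r : ℕ) : Set (Multiset ℕ × Multiset ℕ) :=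
  {p | (∀ x ∈ p.1, 0 < x) ∧ (∀ x ∈ p.2, 0 < x) ∧
    Multiset.card p.1 = b ∧ (∀ x ∈ p.1, x ≤ m) ∧ (∀ x ∈ p.2, x ≤ m) ∧
    p.1.sum + p.2.sum = r}

/-- `MPset b r` is the set of `b`-marked partitions of `r`: pairs `(γ, ε)` of partitions
(multisets of positive natural numbers) with `γ` having exactly `b` parts, `ε` having no parts
equal to `1`, and `|γ| + |ε| = r`. -/
def MPset (b r : ℕ) : Set (Multiset ℕ × Multiset ℕ) :=
  {p | (∀ x ∈ p.1, 0 < x) ∧ (∀ x ∈ p.2, 0 < x) ∧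
    Multiset.card p.1 = b ∧ (∀ x ∈ p.2, x ≠ 1) ∧
    p.1.sum + p.2.sum = r}

/-- `MPmset M b r` is the subset of `MPset b r` of those `(γ, ε)` all of whose parts are
at most `M`. -/
def MPmset (M b r : ℕ) : Set (Multiset ℕ × Multiset ℕ) :=
  {p | p ∈ MPset b r ∧ (∀ x ∈ p.1, x ≤ M) ∧ (∀ x ∈ p.2, x ≤ M)}

/-!
Read a tableau as the pair `(γ, π)` where `γ` is its second row and `π` the positive entries of
its first row. Column strictness makes every entry of the second row positive. Conversely, as
`γ` has `b` positive parts, `π` has at most `r - b` parts, so for `n ≥ r + b` the first row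
of length `n - b` begins with at least `b` zeros and column strictness is automatic. Hence
tableaux correspond to pairs of partitions `(γ, π)` with `b` parts in `γ`, all parts at most `m`
and total size `r`. Among those pairs, the ones where `π` has a part `1` correspond to the pairs
of size `r - 1` by removing that part, and the others are exactly `MP^m_b(r)`.
-/

section ValueMultiset

variable {α : Type*} {k : ℕ}

def valueMultiset (f : Fin k → α) : Multiset α := List.ofFn f

@[simp] theorem card_valueMultiset (f : Fin k → α) : Multiset.card (valueMultiset f) = k := by
  simp [valueMultiset]

@[simp] theorem mem_valueMultiset {f : Fin k → α} {x : α} :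
    x ∈ valueMultiset f ↔ ∃ i, f i = x := by
  simp [valueMultiset]

theorem sum_valueMultiset [AddCommMonoid α] (f : Fin k → α) :
    (valueMultiset f).sum = ∑ i, f i := by
  simp [valueMultiset, List.sum_ofFn]

theorem valueMultiset_injOn_monotone [LinearOrder α] :
    Set.InjOn (valueMultiset (α := α) (k := k)) {f | Monotone f} := fun _ hf _ hg h =>
  List.ofFn_injective <| (Multiset.coe_eq_coe.mp h).eq_of_sortedLE
    (List.sortedLE_ofFn_iff.mpr hf) (List.sortedLE_ofFn_iff.mpr hg)

theorem List.SortedLE.exists_monotone_valueMultiset_eq [Preorder α] {l : List α}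
    (hl : l.SortedLE) (hk : l.length = k) :
    ∃ f : Fin k → α, Monotone f ∧ valueMultiset f = l ∧ ∀ i : Fin k, f i = l[i] := by
  subst hk
  exact ⟨l.get, hl.monotone_get, by simp [valueMultiset, List.ofFn_get], fun _ => rfl⟩

end ValueMultiset

namespace Multiset

theorem filter_pos_add_replicate_count_zero (s : Multiset ℕ) :
    s.filter (0 < ·) + replicate (s.count 0) 0 = s := by
  conv_rhs => rw [← filter_add_not (0 < ·) s]
  rw [← filter_eq']
  congr 1
  exact filter_congr fun x _ => by omega

theorem eq_of_filter_pos_eq_of_card_eq {s t : Multiset ℕ}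
    (hpos : s.filter (0 < ·) = t.filter (0 < ·)) (hcard : card s = card t) : s = t := by
  have hs := congrArg card (filter_pos_add_replicate_count_zero s)
  have ht := congrArg card (filter_pos_add_replicate_count_zero t)
  simp only [card_add, card_replicate, hpos] at hs ht
  rw [← filter_pos_add_replicate_count_zero s, ← filter_pos_add_replicate_count_zero t, hpos]
  congr 2
  omega

theorem sum_filter_pos (s : Multiset ℕ) : (s.filter (0 < ·)).sum = s.sum := by
  conv_rhs => rw [← filter_pos_add_replicate_count_zero s]
  simp

theorem card_le_sum_of_pos {s : Multiset ℕ} (hs : ∀ x ∈ s, 0 < x) : card s ≤ s.sum := by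
  simpa using card_nsmul_le_sum (a := 1) hs

end Multiset

theorem finite_setOf_multiset_pos_sum_le (r : ℕ) :
    {s : Multiset ℕ | (∀ x ∈ s, 0 < x) ∧ s.sum ≤ r}.Finite := by
  refine ((Set.finite_Iic r).biUnion fun i _ =>
    Set.finite_range fun q : Nat.Partition i => q.parts).subset ?_
  rintro s ⟨hpos, hsum⟩
  exact Set.mem_biUnion (Set.mem_Iic.mpr hsum) ⟨⟨s, fun hx => hpos _ hx, rfl⟩, rfl⟩

theorem PPset_finite (b m r : ℕ) : (PPset b m r).Finite := by
  refine ((finite_setOf_multiset_pos_sum_le r).prod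
    (finite_setOf_multiset_pos_sum_le r)).subset ?_
  rintro ⟨γ, π⟩ ⟨hγ, hπ, -, -, -, hsum : γ.sum + π.sum = r⟩
  exact ⟨⟨hγ, hsum ▸ Nat.le_add_right _ _⟩, ⟨hπ, hsum ▸ Nat.le_add_left _ _⟩⟩

section TwoRow

variable {b m n r : ℕ}

def tableauToPair (t : (Fin (n - b) → ℕ) × (Fin b → ℕ)) : Multiset ℕ × Multiset ℕ :=
  (valueMultiset t.2, (valueMultiset t.1).filter (0 < ·))

theorem mapsTo_tableauToPair (hbn : b < n) :
    Set.MapsTo tableauToPair (TwoRowSSYT m n b r) (PPset b m r) := by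
  rintro ⟨f, g⟩ ⟨-, hg, hcol, hfm, hgm, hsum⟩
  dsimp only [tableauToPair] at hg hcol hfm hgm hsum ⊢
  have hgpos (j : Fin b) : 0 < g j :=
    calc 0 ≤ f ⟨0, Nat.sub_pos_of_lt hbn⟩ := Nat.zero_le _
      _ < g ⟨0, j.pos⟩ := hcol 0 _ _
      _ ≤ g j := hg (Nat.zero_le _)
  refine ⟨?_, ?_, card_valueMultiset g, ?_, ?_, ?_⟩
  · rintro _ hx
    obtain ⟨j, rfl⟩ := mem_valueMultiset.mp hx
    exact hgpos j
  · intro x hx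
    simp only [Multiset.mem_filter] at hx
    exact hx.2
  · rintro _ hx
    obtain ⟨j, rfl⟩ := mem_valueMultiset.mp hx
    exact hgm j
  · rintro _ hx
    obtain ⟨i, rfl⟩ := mem_valueMultiset.mp (Multiset.mem_of_mem_filter hx)
    exact hfm i
  · simpa only [tableauToPair, Multiset.sum_filter_pos, sum_valueMultiset, add_comm] using hsum

theorem injOn_tableauToPair : Set.InjOn tableauToPair (TwoRowSSYT m n b r) := by
  rintro ⟨f, g⟩ ⟨hf, hg, -⟩ ⟨f', g'⟩ ⟨hf', hg', -⟩ h
  simp only [tableauToPair, Prod.mk.injEq] at h ⊢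
  have hff' : valueMultiset f = valueMultiset f' :=
    Multiset.eq_of_filter_pos_eq_of_card_eq h.2 (by simp)
  exact ⟨valueMultiset_injOn_monotone hf hf' hff', valueMultiset_injOn_monotone hg hg' h.1⟩

theorem surjOn_tableauToPair (hrn : r + b ≤ n) :
    Set.SurjOn tableauToPair (TwoRowSSYT m n b r) (PPset b m r) := by
  rintro ⟨γ, π⟩ ⟨hγpos, hπpos, hγcard, hγm, hπm, hsum⟩
  dsimp only at hγpos hπpos hγcard hγm hπm hsum
  have hγsum := Multiset.card_le_sum_of_pos hγpos
  have hπsum := Multiset.card_le_sum_of_pos hπpos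
  set z := n - b - Multiset.card π
  obtain ⟨g, hg, hgγ, -⟩ := (Multiset.pairwise_sort γ _).sortedLE.exists_monotone_valueMultiset_eq
    (by rw [Multiset.length_sort, hγcard])
  have hsorted : (List.replicate z 0 ++ π.sort).SortedLE :=
    (List.pairwise_append.mpr ⟨List.pairwise_replicate.mpr (Or.inr le_rfl),
      Multiset.pairwise_sort π _, fun x hx _ _ => (List.eq_of_mem_replicate hx).trans_le
        (Nat.zero_le _)⟩).sortedLE
  obtain ⟨f, hf, hfπ, hf_apply⟩ := hsorted.exists_monotone_valueMultiset_eq (k := n - b)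
    (by simp only [List.length_append, List.length_replicate, Multiset.length_sort]; omega)
  simp only [Multiset.sort_eq, ← Multiset.coe_add, Multiset.coe_replicate] at hgγ hfπ
  -- `π` has at most `r - b` parts, so the first row starts with at least `n - r ≥ b` zeros
  have hf_zero (j : Fin (n - b)) (hj : (j : ℕ) < b) : f j = 0 := by
    rw [hf_apply, Fin.getElem_fin,
      List.getElem_append_left (by simp only [List.length_replicate]; omega),
      List.getElem_replicate]
  refine ⟨(f, g), ⟨hf, hg, fun j hk hnk => ?_, fun i => ?_, fun j => ?_, ?_⟩, ?_⟩
  · dsimp only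
    rw [hf_zero ⟨j, hnk⟩ hk]
    exact hγpos _ (hgγ ▸ mem_valueMultiset.mpr ⟨_, rfl⟩)
  · rcases Multiset.mem_add.mp (hfπ ▸ mem_valueMultiset.mpr ⟨i, rfl⟩) with h | h
    · exact (Multiset.eq_of_mem_replicate h).trans_le (Nat.zero_le m)
    · exact hπm _ h
  · exact hγm _ (hgγ ▸ mem_valueMultiset.mpr ⟨_, rfl⟩)
  · simp only [← sum_valueMultiset, hfπ, hgγ, Multiset.sum_add, Multiset.sum_replicate,
      smul_zero, zero_add]
    omega
  · simp only [tableauToPair, hfπ, hgγ, Multiset.filter_add, Multiset.filter_eq_self.mpr hπpos,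
      Multiset.filter_eq_nil.mpr fun x hx => (Multiset.eq_of_mem_replicate hx).not_gt, zero_add]

theorem ncard_twoRowSSYT_eq_ncard_PPset (hrn : r + b ≤ n) (hbn : b < n) :
    (TwoRowSSYT m n b r).ncard = (PPset b m r).ncard :=
  Set.BijOn.ncard_eq ⟨mapsTo_tableauToPair hbn, injOn_tableauToPair, surjOn_tableauToPair hrn⟩

end TwoRow

section MarkedPartitions

variable {b m r : ℕ}

theorem MPmset_eq_PPset_diff : MPmset m b r = PPset b m r \ {p | 1 ∈ p.2} := by
  ext ⟨γ, ε⟩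
  constructor
  · rintro ⟨⟨hγpos, hεpos, hγcard, hε1, hsum⟩, hγm, hεm⟩
    exact ⟨⟨hγpos, hεpos, hγcard, hγm, hεm, hsum⟩, fun h => hε1 1 h rfl⟩
  · rintro ⟨⟨hγpos, hεpos, hγcard, hγm, hεm, hsum⟩, h1⟩
    exact ⟨⟨hγpos, hεpos, hγcard, fun x hx hx1 => h1 (hx1 ▸ hx), hsum⟩, hγm, hεm⟩

theorem image_prodMap_cons_one_PPset (hm : 1 ≤ m) :
    Prod.map id (1 ::ₘ ·) '' PPset b m r = PPset b m (r + 1) ∩ {p | 1 ∈ p.2} := by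
  ext p
  constructor
  · rintro ⟨⟨γ, ε⟩, ⟨hγpos, hεpos, hγcard, hγm, hεm, hsum : γ.sum + ε.sum = r⟩, rfl⟩
    refine ⟨⟨hγpos, Multiset.forall_mem_cons.mpr ⟨Nat.one_pos, hεpos⟩, hγcard, hγm,
      Multiset.forall_mem_cons.mpr ⟨hm, hεm⟩, ?_⟩, Multiset.mem_cons_self 1 ε⟩
    simp only [Prod.map, id, Multiset.sum_cons]
    omega
  · obtain ⟨γ, ε⟩ := p
    rintro ⟨⟨hγpos, hεpos, hγcard, hγm, hεm, hsum : γ.sum + ε.sum = r + 1⟩, h1 : 1 ∈ ε⟩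
    refine ⟨(γ, ε.erase 1), ⟨hγpos, fun x hx => hεpos x (Multiset.mem_of_mem_erase hx), hγcard,
      hγm, fun x hx => hεm x (Multiset.mem_of_mem_erase hx), ?_⟩, ?_⟩
    · have := Multiset.sum_erase h1
      dsimp only
      omega
    · exact Prod.ext rfl (Multiset.cons_erase h1)

theorem ncard_PPset_succ (hm : 1 ≤ m) :
    (PPset b m (r + 1)).ncard = (PPset b m r).ncard + (MPmset m b (r + 1)).ncard := by
  rw [MPmset_eq_PPset_diff, ← Set.ncard_inter_add_ncard_sdiff_eq_ncard _ {p | 1 ∈ p.2}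
    (PPset_finite _ _ _), ← image_prodMap_cons_one_PPset hm, Set.ncard_image_of_injective _
    (Function.injective_id.prodMap fun _ _ => (Multiset.cons_inj_right 1).mp)]

end MarkedPartitions

theorem twoRowSSYT_card_eq_card_add_MPm_card_general (b m n r : ℕ)
    (hm : 1 ≤ m) (hr : 1 ≤ r) (h2 : r + b ≤ n) :
    (TwoRowSSYT m n b r).ncard
      = (TwoRowSSYT m n b (r - 1)).ncard + (MPmset m b r).ncard := by
  obtain ⟨r, rfl⟩ := Nat.exists_eq_add_of_le' hr
  rw [Nat.add_sub_cancel, ncard_twoRowSSYT_eq_ncard_PPset h2 (by omega),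
    ncard_twoRowSSYT_eq_ncard_PPset (by omega) (by omega), ncard_PPset_succ hm]

/-- For `m ≥ 1`, `r ≥ 1`, `n ≥ r + b` and `n ≥ 2b`,
`|T(m,n,b)_r| = |T(m,n,b)_{r−1}| + |MP^m_b(r)|`. -/
theorem twoRowSSYT_card_eq_card_add_MPm_card (b m n r : ℕ)
    (hm : 1 ≤ m) (hr : 1 ≤ r) (h2 : r + b ≤ n) (h3 : 2 * b ≤ n) :
    (TwoRowSSYT m n b r).ncard
      = (TwoRowSSYT m n b (r - 1)).ncard + (MPmset m b r).ncard :=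
  twoRowSSYT_card_eq_card_add_MPm_card_general b m n r hm hr h2
end

section
/- Let b, r ∈ ℕ. (a) If b ≥ 1 and r ≥ b, then |MP^{r−b}_b(r)| = |MP_b(r)| − 1; the unique b-marked partition of r excluded by the bound r−b on parts is ((r−b+1, 1^{b−1}), ∅). (b) If b = 0 and r ≥ 2, then |MP^{r−1}_0(r)| = |MP_0(r)| − 1; the unique excluded 0-marked partition is (∅, (r)). -/
open scoped BigOperators

lemma card_le_sum_of_pos (s : Multiset ℕ) (h : ∀ x ∈ s, 0 < x) :
    Multiset.card s ≤ s.sum := by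
  induction s using Multiset.induction with
  | empty => simp
  | cons a t ih =>
    simp only [Multiset.sum_cons, Multiset.card_cons]
    have ha := h a (by simp)
    have := ih (fun x hx => h x (by simp [hx]))
    omega

lemma eq_replicate_one (s : Multiset ℕ) (h : ∀ x ∈ s, 0 < x)
    (hs : s.sum ≤ Multiset.card s) : s = Multiset.replicate (Multiset.card s) 1 := by
  rw [Multiset.eq_replicate]
  refine ⟨rfl, fun x hx => ?_⟩
  obtain ⟨t, rfl⟩ := Multiset.exists_cons_of_mem hx
  have h1 := card_le_sum_of_pos t (fun y hy => h y (by simp [hy]))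
  have h2 := h x (by simp)
  simp only [Multiset.sum_cons, Multiset.card_cons] at hs
  omega

lemma sum_pos_finite (r : ℕ) :
    {p : Multiset ℕ × Multiset ℕ | (∀ x ∈ p.1, 0 < x) ∧ (∀ x ∈ p.2, 0 < x) ∧
      p.1.sum + p.2.sum = r}.Finite := by
  have hsub : {p : Multiset ℕ × Multiset ℕ | (∀ x ∈ p.1, 0 < x) ∧ (∀ x ∈ p.2, 0 < x) ∧
      p.1.sum + p.2.sum = r} ⊆ ⋃ k ∈ Finset.range (r+1),
      (fun pq : Nat.Partition k × Nat.Partition (r-k) => (pq.1.parts, pq.2.parts)) ''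
        Set.univ := by
    rintro ⟨s, t⟩ ⟨h1, h2, h5⟩
    dsimp only at h1 h2 h5
    have hk : s.sum ≤ r := by omega
    refine Set.mem_iUnion₂.mpr ⟨s.sum, Finset.mem_range.mpr (by omega), ?_⟩
    exact ⟨(⟨s, @h1, rfl⟩, ⟨t, @h2, by omega⟩), Set.mem_univ _, rfl⟩
  exact Set.Finite.subset (Set.Finite.biUnion (Finset.finite_toSet _)
    (fun k _ => Set.finite_univ.image _)) hsub


lemma MPset_finite' (b r : ℕ) : (MPset b r).Finite := by
  refine (sum_pos_finite r).subset ?_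
  rintro ⟨s, t⟩ ⟨h1, h2, h3, h4, h5⟩
  exact ⟨h1, h2, h5⟩

/-- (a) If `b ≥ 1` and `r ≥ b` then `|MP^{r−b}_b(r)| = |MP_b(r)| − 1`,
the unique excluded `b`-marked partition being `((r−b+1, 1^{b−1}), ∅)`.
(b) If `b = 0` and `r ≥ 2` then `|MP^{r−1}_0(r)| = |MP_0(r)| − 1`, the unique excluded
`0`-marked partition being `(∅, (r))`. -/
theorem MPm_card_eq_MP_card_sub_one (b r : ℕ) :
    (1 ≤ b → b ≤ r →
      ((MPmset (r - b) b r).ncard + 1 = (MPset b r).ncard ∧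
        MPset b r \ MPmset (r - b) b r
          = {((r - b + 1) ::ₘ Multiset.replicate (b - 1) 1, (0 : Multiset ℕ))})) ∧
    (b = 0 → 2 ≤ r →
      ((MPmset (r - 1) 0 r).ncard + 1 = (MPset 0 r).ncard ∧
        MPset 0 r \ MPmset (r - 1) 0 r
          = {((0 : Multiset ℕ), ({r} : Multiset ℕ))})) := by
  have hfin := MPset_finite' b r
  have hsub : ∀ M, MPmset M b r ⊆ MPset b r := fun M p hp => hp.1
  have hcard : ∀ M x₀, MPset b r \ MPmset M b r = {x₀} →
      (MPmset M b r).ncard + 1 = (MPset b r).ncard := by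
    intro M x₀ hd
    have h1 := Set.ncard_diff_add_ncard_of_subset (hsub M) hfin
    rw [hd, Set.ncard_singleton] at h1
    omega
  constructor
  · intro hb hbr
    have hdiff : MPset b r \ MPmset (r - b) b r
        = {((r - b + 1) ::ₘ Multiset.replicate (b - 1) 1, (0 : Multiset ℕ))} := by
      ext ⟨s, t⟩
      simp only [Set.mem_diff, Set.mem_singleton_iff, MPset, MPmset, Set.mem_setOf_eq,
        Prod.mk.injEq]
      constructor
      · rintro ⟨⟨h1, h2, h3, h4, h5⟩, hnot⟩
        have hbound : (∃ x ∈ s, r - b < x) ∨ (∃ x ∈ t, r - b < x) := by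
          by_contra hc
          push_neg at hc
          exact hnot ⟨⟨h1, h2, h3, h4, h5⟩, hc.1, hc.2⟩
        rcases hbound with ⟨x, hxs, hx⟩ | ⟨x, hxt, hx⟩
        · obtain ⟨s', rfl⟩ := Multiset.exists_cons_of_mem hxs
          simp only [Multiset.sum_cons, Multiset.card_cons] at h3 h5
          have hcs' := card_le_sum_of_pos s' (fun y hy => h1 y (by simp [hy]))
          have hct := card_le_sum_of_pos t h2
          have ht0 : t.sum = 0 := by omega
          have htz : t = 0 := by
            by_contra h
            obtain ⟨y, hy⟩ := Multiset.exists_mem_of_ne_zero h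
            obtain ⟨t', rfl⟩ := Multiset.exists_cons_of_mem hy
            have := h2 y (by simp)
            simp only [Multiset.sum_cons] at ht0
            omega
          have hx1 : x = r - b + 1 := by omega
          have hs' : s'.sum = Multiset.card s' := by omega
          have := eq_replicate_one s' (fun y hy => h1 y (by simp [hy])) (le_of_eq hs')
          refine ⟨?_, htz⟩
          have hcb : Multiset.card s' = b - 1 := by omega
          rw [hx1, this, hcb]
        · obtain ⟨t', rfl⟩ := Multiset.exists_cons_of_mem hxt
          simp only [Multiset.sum_cons] at h5
          have hcs := card_le_sum_of_pos s h1
          omega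
      · rintro ⟨rfl, rfl⟩
        have hmem : (∀ x ∈ (r - b + 1) ::ₘ Multiset.replicate (b - 1) 1, 0 < x) := by
          intro x hx
          rcases Multiset.mem_cons.mp hx with rfl | hx
          · omega
          · rw [Multiset.eq_of_mem_replicate hx]; omega
        refine ⟨⟨hmem, by simp, by simp; omega, by simp, ?_⟩, ?_⟩
        · simp [Multiset.sum_replicate]
          omega
        · rintro ⟨-, hb1, -⟩
          have := hb1 (r - b + 1) (by simp)
          omega
    exact ⟨hcard _ _ hdiff, hdiff⟩
  · intro hb0 hr2
    subst hb0
    have hdiff : MPset 0 r \ MPmset (r - 1) 0 r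
        = {((0 : Multiset ℕ), ({r} : Multiset ℕ))} := by
      ext ⟨s, t⟩
      simp only [Set.mem_diff, Set.mem_singleton_iff, MPset, MPmset, Set.mem_setOf_eq,
        Prod.mk.injEq]
      constructor
      · rintro ⟨⟨h1, h2, h3, h4, h5⟩, hnot⟩
        have hs0 : s = 0 := Multiset.card_eq_zero.mp h3
        subst hs0
        simp only [Multiset.sum_zero, zero_add] at h5
        have hbound : ∃ x ∈ t, r - 1 < x := by
          by_contra hc
          push_neg at hc
          exact hnot ⟨⟨h1, h2, h3, h4, by simpa using h5⟩, by simp, hc⟩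
        obtain ⟨x, hxt, hx⟩ := hbound
        obtain ⟨t', rfl⟩ := Multiset.exists_cons_of_mem hxt
        simp only [Multiset.sum_cons] at h5
        have hx2 := h2 x (by simp)
        have ht0 : t'.sum = 0 := by omega
        have htz : t' = 0 := by
          by_contra h
          obtain ⟨y, hy⟩ := Multiset.exists_mem_of_ne_zero h
          obtain ⟨t'', rfl⟩ := Multiset.exists_cons_of_mem hy
          have := h2 y (by simp)
          simp only [Multiset.sum_cons] at ht0
          omega
        subst htz
        refine ⟨rfl, ?_⟩
        simp only [Multiset.sum_zero, add_zero] at h5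
        rw [h5]
        rfl
      · rintro ⟨rfl, rfl⟩
        refine ⟨⟨by simp, by simp; omega, by simp, by simp; omega, by simp⟩, ?_⟩
        rintro ⟨-, -, hb1⟩
        have := hb1 r (by simp)
        omega
    exact ⟨hcard _ _ hdiff, hdiff⟩
end

section
/- Let b ≥ 1 and r ≥ 0 be natural numbers. Then the number |MP_b(r)| of b-marked partitions of r equals the coefficient of X^r in the formal power series X^b · (∏_{i=2}^{b} (1 − X^i))^{−1} · (∏_{i=1}^{r} (1 − X^i))^{−1} ∈ ℚ⟦X⟧. (Equivalently, the generating function ∑_{r≥0} |MP_b(r)| z^r equals z^b/((1−z^2)(1−z^3)⋯(1−z^b)) times the partition generating function ∏_{i≥1}(1−z^i)^{−1}; truncating the infinite product at i = r does not change the coefficient of X^r.) -/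
open scoped BigOperators

/-!
A `b`-marked partition is a pair of unrelated partitions, so its generating function is the
product of two generating functions. Partitions with exactly `b` parts satisfy
`p_{b+1}(n) = p_b(n - 1) + p_{b+1}(n - b - 1)` (remove a part `1`, or subtract `1` from every
part), which gives `X^b / ∏_{i=1}^{b} (1 - X^i)`. Partitions without parts `1` have generating
function `∏_{i ≥ 2} (1 - X^i)⁻¹`, and up to degree `r` only the factors with `i ≤ r` matter.
Moving the factor `1 - X` from one product to the other gives the stated form.
-/

open PowerSeries Finset
open scoped PowerSeries.WithPiTopology

theorem Multiset.sum_map_add_one (s : Multiset ℕ) :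
    (s.map (· + 1)).sum = s.sum + Multiset.card s := by
  simp [Multiset.sum_map_add]

theorem Finset.prod_Icc_one_eq_mul_prod_Icc_two {M : Type*} [CommMonoid M] {n : ℕ} (hn : 1 ≤ n)
    (f : ℕ → M) : ∏ i ∈ Icc 1 n, f i = f 1 * ∏ i ∈ Icc 2 n, f i := by
  rw [← insert_Icc_add_one_left_eq_Icc hn, prod_insert (by simp)]
  rfl

theorem PowerSeries.constantCoeff_prod_one_sub_X_pow {R : Type*} [CommRing R] {s : Finset ℕ}
    (hs : 0 ∉ s) : constantCoeff (∏ i ∈ s, (1 - X ^ i : R⟦X⟧)) = 1 := by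
  rw [map_prod]
  exact prod_eq_one fun i hi ↦ by simp [zero_pow (ne_of_mem_of_not_mem hi hs)]

namespace Nat.Partition

theorem length_le {n : ℕ} (p : n.Partition) : Multiset.card p.parts ≤ n := by
  simpa [p.parts_sum] using Multiset.card_nsmul_le_sum (a := 1) fun _ hi ↦ p.parts_pos hi

theorem restricted_congr {n : ℕ} {p q : ℕ → Prop} [DecidablePred p] [DecidablePred q]
    (h : ∀ i, 1 ≤ i → i ≤ n → (p i ↔ q i)) : restricted n p = restricted n q :=
  filter_congr fun x _ ↦ forall₂_congr fun _ hi ↦ h _ (x.parts_pos hi) (le_of_mem_parts hi)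

/- The topology on `R` only serves to apply `hasProd_powerSeriesMk_card_restricted`;
the discrete one makes `∑' j, X ^ (i * j)` the geometric series. -/
theorem powerSeriesMk_card_restricted_mem_mul_prod (R : Type*) [CommRing R] {s : Finset ℕ}
    (hs : 0 ∉ s) :
    PowerSeries.mk (fun n ↦ (#(restricted n (· ∈ s)) : R)) * ∏ i ∈ s, (1 - X ^ i) = 1 := by
  let _ : TopologicalSpace R := ⊥
  have _ : DiscreteTopology R := ⟨rfl⟩
  let F : ℕ → R⟦X⟧ := fun i ↦ if i ∈ s then ∑' j : ℕ, X ^ (i * j) else 1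
  have hF : HasProd F (PowerSeries.mk fun n ↦ (#(restricted n (· ∈ s)) : R)) := by
    refine (add_left_injective 1).hasProd_iff (fun i hi ↦ ?_) |>.mp
      (hasProd_powerSeriesMk_card_restricted R (· ∈ s))
    obtain rfl : i = 0 := by simpa [eq_comm] using hi
    simp [F, hs]
  rw [hF.unique (hasProd_prod_of_ne_finset_one fun i hi ↦ if_neg hi), ← prod_mul_distrib]
  refine prod_eq_one fun i hi ↦ ?_
  simp only [F, if_pos hi, pow_mul]
  exact WithPiTopology.tsum_pow_mul_one_sub_of_constantCoeff_eq_zero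
    (by simp [ne_of_mem_of_not_mem hi hs])

def withLength (n b : ℕ) : Finset n.Partition :=
  univ.filter fun p ↦ Multiset.card p.parts = b

@[simp]
theorem mem_withLength {n b : ℕ} {p : n.Partition} :
    p ∈ withLength n b ↔ Multiset.card p.parts = b := by
  simp [withLength]

theorem withLength_eq_empty {n b : ℕ} (h : n < b) : withLength n b = ∅ :=
  filter_eq_empty_iff.mpr fun p _ hp ↦ (hp ▸ h).not_ge p.length_le

theorem card_withLength_zero (n : ℕ) : #(withLength n 0) = if n = 0 then 1 else 0 := by
  split_ifs with hn
  · subst hn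
    exact card_eq_one.mpr ⟨indiscrete 0, by ext p; simp [Partition.ext_iff]⟩
  · refine Finset.card_eq_zero.mpr (filter_eq_empty_iff.mpr fun p _ hp ↦ hn ?_)
    rw [← p.parts_sum, Multiset.card_eq_zero.mp hp, Multiset.sum_zero]

theorem card_filter_one_mem_withLength (m b : ℕ) :
    #{p ∈ withLength (m + 1) (b + 1) | 1 ∈ p.parts} = #(withLength m b) := by
  refine card_bij'
    (fun p hp ↦ ⟨p.parts.erase 1, fun hi ↦ p.parts_pos (Multiset.mem_of_mem_erase hi), ?_⟩)
    (fun q _ ↦ ⟨1 ::ₘ q.parts, ?_, ?_⟩) ?_ ?_ ?_ ?_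
  · have := Multiset.sum_erase (mem_filter.mp hp).2
    rw [p.parts_sum] at this
    omega
  · simpa using fun _ hi ↦ q.parts_pos hi
  · simp [q.parts_sum, add_comm]
  · intro p hp
    simp only [mem_filter, mem_withLength] at hp
    simp [Multiset.card_erase_of_mem hp.2, hp.1]
  · intro q hq
    simp_all
  · intro p hp
    exact Partition.ext (Multiset.cons_erase (mem_filter.mp hp).2)
  · intro q _
    exact Partition.ext (Multiset.erase_cons_head 1 q.parts)

theorem card_filter_one_notMem_withLength (m b : ℕ) :
    #{p ∈ withLength (m + b) b | 1 ∉ p.parts} = #(withLength m b) := by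
  have hsucc {n : ℕ} (p : n.Partition) (h1 : 1 ∉ p.parts) :
      (p.parts.map (· - 1)).map (· + 1) = p.parts := by
    rw [Multiset.map_map]
    refine (Multiset.map_congr rfl fun i hi ↦ ?_).trans (Multiset.map_id _)
    have := p.parts_pos hi
    simp only [Function.comp_apply, id]
    omega
  refine card_bij'
    (fun p hp ↦ ⟨p.parts.map (· - 1), ?_, ?_⟩)
    (fun q hq ↦ ⟨q.parts.map (· + 1), by simp, ?_⟩) ?_ ?_ ?_ ?_
  · simp only [mem_filter, mem_withLength] at hp
    simp only [Multiset.mem_map]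
    rintro _ ⟨i, hi, rfl⟩
    have := p.parts_pos hi
    have : i ≠ 1 := fun h ↦ hp.2 (h ▸ hi)
    omega
  · simp only [mem_filter, mem_withLength] at hp
    have := Multiset.sum_map_add_one (p.parts.map (· - 1))
    rw [hsucc p hp.2, p.parts_sum, Multiset.card_map, hp.1] at this
    omega
  · rw [mem_withLength] at hq
    rw [Multiset.sum_map_add_one, q.parts_sum, hq]
  · intro p hp
    simp only [mem_filter, mem_withLength] at hp
    simp [hp.1]
  · intro q hq
    rw [mem_withLength] at hq
    simpa [hq] using fun h ↦ lt_irrefl 0 (q.parts_pos h)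
  · intro p hp
    exact Partition.ext (hsucc p (mem_filter.mp hp).2)
  · intro q _
    ext1
    simp [Multiset.map_map]

theorem card_withLength_add_succ (m b : ℕ) :
    #(withLength (m + (b + 1)) (b + 1)) = #(withLength (m + b) b) + #(withLength m (b + 1)) := by
  rw [← card_filter_add_card_filter_not (s := withLength _ _) (1 ∈ ·.parts)]
  exact congrArg₂ (· + ·) (card_filter_one_mem_withLength (m + b) b)
    (card_filter_one_notMem_withLength m (b + 1))

theorem powerSeriesMk_card_withLength_succ (R : Type*) [CommSemiring R] (b : ℕ) :
    PowerSeries.mk (fun n ↦ (#(withLength n (b + 1)) : R)) =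
      X * PowerSeries.mk (fun n ↦ (#(withLength n b) : R)) +
        X ^ (b + 1) * PowerSeries.mk (fun n ↦ (#(withLength n (b + 1)) : R)) := by
  ext n
  rw [map_add, coeff_X_pow_mul', ← pow_one (X : R⟦X⟧), coeff_X_pow_mul', coeff_mk, coeff_mk,
    coeff_mk]
  rcases lt_or_ge n (b + 1) with hn | hn
  · rw [withLength_eq_empty hn, if_neg hn.not_ge]
    split_ifs with h1
    · simp [withLength_eq_empty (show n - 1 < b by omega)]
    · simp
  · obtain ⟨m, rfl⟩ := Nat.exists_eq_add_of_le' hn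
    rw [if_pos (by omega), if_pos hn, show m + (b + 1) - 1 = m + b by omega, Nat.add_sub_cancel,
      card_withLength_add_succ, Nat.cast_add]

theorem powerSeriesMk_card_withLength_mul_prod (R : Type*) [CommRing R] (b : ℕ) :
    PowerSeries.mk (fun n ↦ (#(withLength n b) : R)) * ∏ i ∈ Icc 1 b, (1 - X ^ i) = X ^ b := by
  induction b with
  | zero =>
    ext n
    simp [card_withLength_zero, coeff_one]
  | succ b ih =>
    rw [prod_Icc_succ_top (by omega)]
    linear_combination (∏ i ∈ Icc 1 b, (1 - X ^ i)) * powerSeriesMk_card_withLength_succ R b +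
      X * ih

end Nat.Partition

open Nat.Partition

theorem X_pow_mul_inv_prod_mul_inv_prod_eq_mk_mul_mk {K : Type*} [Field K] {b r : ℕ}
    (hb : 1 ≤ b) (hr : 1 ≤ r) :
    X ^ b * (∏ i ∈ Icc 2 b, (1 - X ^ i))⁻¹ * (∏ i ∈ Icc 1 r, (1 - X ^ i))⁻¹ =
      PowerSeries.mk (fun n ↦ (#(withLength n b) : K)) *
        PowerSeries.mk (fun n ↦ (#(restricted n (· ∈ Icc 2 r)) : K)) := by
  have hunit {a n : ℕ} (ha : 1 ≤ a) : constantCoeff (∏ i ∈ Icc a n, (1 - X ^ i : K⟦X⟧)) ≠ 0 := by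
    rw [constantCoeff_prod_one_sub_X_pow (by simp only [mem_Icc]; omega)]
    exact one_ne_zero
  have hA := powerSeriesMk_card_withLength_mul_prod K b
  have hE := powerSeriesMk_card_restricted_mem_mul_prod K (s := Icc 2 r) (by simp)
  rw [prod_Icc_one_eq_mul_prod_Icc_two hb, pow_one] at hA
  rw [eq_comm, eq_mul_inv_iff_mul_eq (hunit le_rfl), eq_mul_inv_iff_mul_eq (hunit one_le_two),
    prod_Icc_one_eq_mul_prod_Icc_two hr, pow_one]
  linear_combination (PowerSeries.mk (fun n ↦ (#(restricted n (· ∈ Icc 2 r)) : K)) *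
    ∏ i ∈ Icc 2 r, (1 - X ^ i)) * hA + X ^ b * hE

theorem ncard_MPset (b r : ℕ) :
    (MPset b r).ncard = ∑ x ∈ antidiagonal r, #(withLength x.1 b) * #(restricted x.2 (· ≠ 1)) := by
  let S := (antidiagonal r).sigma fun x ↦ withLength x.1 b ×ˢ restricted x.2 (· ≠ 1)
  let φ : (Σ x : ℕ × ℕ, x.1.Partition × x.2.Partition) → Multiset ℕ × Multiset ℕ :=
    fun y ↦ (y.2.1.parts, y.2.2.parts)
  have hφ : Function.Injective φ := by
    rintro ⟨⟨u, v⟩, p, q⟩ ⟨⟨u', v'⟩, p', q'⟩ h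
    obtain ⟨hp, hq⟩ := Prod.mk.inj h
    obtain rfl : u = u' := p.parts_sum.symm.trans (congrArg _ hp |>.trans p'.parts_sum)
    obtain rfl : v = v' := q.parts_sum.symm.trans (congrArg _ hq |>.trans q'.parts_sum)
    obtain rfl : p = p' := Nat.Partition.ext hp
    obtain rfl : q = q' := Nat.Partition.ext hq
    rfl
  have hMP : MPset b r = φ '' S := by
    ext ⟨γ, ε⟩
    constructor
    · rintro ⟨hγ, hε, hcard, hne, hsum⟩
      refine ⟨⟨(γ.sum, ε.sum), ⟨γ, hγ _, rfl⟩, ⟨ε, hε _, rfl⟩⟩, ?_, rfl⟩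
      simpa [S, hsum, hcard, restricted] using hne
    · rintro ⟨⟨⟨u, v⟩, p, q⟩, hS, hpq⟩
      obtain ⟨rfl, rfl⟩ := Prod.mk.inj hpq
      simp only [S, restricted, mem_coe, mem_sigma, HasAntidiagonal.mem_antidiagonal, mem_product,
        mem_withLength, mem_filter, mem_univ, true_and] at hS
      exact ⟨fun _ ↦ p.parts_pos, fun _ ↦ q.parts_pos, hS.2.1, hS.2.2,
        by rw [p.parts_sum, q.parts_sum, hS.1]⟩
  rw [hMP, Set.ncard_image_of_injective _ hφ, Set.ncard_coe_finset, card_sigma]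
  simp_rw [card_product]

open PowerSeries in
/-- For `b ≥ 1`, the number of `b`-marked partitions of `r` is the
coefficient of `X^r` in
`X^b · (∏_{i=2}^{b} (1 − X^i))⁻¹ · (∏_{i=1}^{r} (1 − X^i))⁻¹ ∈ ℚ⟦X⟧`. -/
theorem MP_card_eq_coeff_genFun (b r : ℕ) (hb : 1 ≤ b) :
    ((MPset b r).ncard : ℚ) =
      PowerSeries.coeff (R := ℚ) r
        ((PowerSeries.X : PowerSeries ℚ) ^ b
          * (∏ i ∈ Finset.Icc 2 b, (1 - (PowerSeries.X : PowerSeries ℚ) ^ i))⁻¹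
          * (∏ i ∈ Finset.Icc 1 r, (1 - (PowerSeries.X : PowerSeries ℚ) ^ i))⁻¹) := by
  -- For `r = 0` the factor `1 - X` is absent from the right-hand side, but both sides vanish.
  rcases Nat.eq_zero_or_pos r with rfl | hr
  · simp [ncard_MPset, withLength_eq_empty hb, zero_pow (Nat.one_le_iff_ne_zero.mp hb)]
  rw [X_pow_mul_inv_prod_mul_inv_prod_eq_mk_mul_mk hb hr, coeff_mul, ncard_MPset]
  push_cast
  refine sum_congr rfl fun x hx ↦ ?_
  have hx₂ := HasAntidiagonal.antidiagonal.snd_le hx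
  rw [coeff_mk, coeff_mk, restricted_congr (q := (· ∈ Icc 2 r)) fun i hi hix ↦ by
    simp only [mem_Icc]; omega]
end
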